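/- The collection 𝒱 ∪ 𝒱_∞ is locally finite: every compact subset of H²×H² meets only finitely many distinct sets belonging to 𝒱 ∪ 𝒱_∞. -/

import Mathlib

noncomputable section

open scoped Classical
open MeasureTheory

namespace Hilbert

/-- `k₀ = 2` if `k ≡ 1 (mod 4)` and `k₀ = 1` otherwise. -/
def k0 (k : ℕ) : ℝ := if k % 4 = 1 then 2 else 1

/-- `ω = (1 + √k)/k₀`. -/
def omg (k : ℕ) : ℝ := (1 + Real.sqrt k) / k0 k

/-- `ω' = (1 - √k)/k₀`, the algebraic conjugate of `ω`. -/
def omg' (k : ℕ) : ℝ := (1 - Real.sqrt k) / k0 k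

/-- The ring `R = ℤ[ω]`, realized inside `ℝ × ℝ` via the pair of real embeddings
`α ↦ (α, α')` of `K = ℚ(√k)`. -/
def R (k : ℕ) : Subring (ℝ × ℝ) := Subring.closure {(omg k, omg' k)}

/-- The ambient space `ℝ⁴`, with coordinates `(x₁, x₂, y₁, y₂)`. -/
abbrev Pt : Type := ℝ × ℝ × ℝ × ℝ

def x1 (p : Pt) : ℝ := p.1
def x2 (p : Pt) : ℝ := p.2.1
def y1 (p : Pt) : ℝ := p.2.2.1
def y2 (p : Pt) : ℝ := p.2.2.2

/-- `H² × H²`, identified with an open subset of `ℝ⁴`. -/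
def HH : Set Pt := {p | 0 < y1 p ∧ 0 < y2 p}

/-- The coordinate `s₁`, determined by `x₁ = s₁ + s₂ ω`, `x₂ = s₁ + s₂ ω'`. -/
def s1 (k : ℕ) (p : Pt) : ℝ := (omg' k * x1 p - omg k * x2 p) / (omg' k - omg k)

/-- The coordinate `s₂`. -/
def s2 (k : ℕ) (p : Pt) : ℝ := (x1 p - x2 p) / (omg k - omg' k)

/-- The ratio `r = y₁/y₂`. -/
def rr (p : Pt) : ℝ := y1 p / y2 p

/-- The height `h = y₁ y₂`. -/
def hh (p : Pt) : ℝ := y1 p * y2 p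

/-- `‖cZ+d‖ = ((cx₁+d)² + c²y₁²)((c'x₂+d')² + c'²y₂²)`, where `c = (c, c')`, `d = (d, d')`
are given by their two real embeddings. -/
def HNorm (c d : ℝ × ℝ) (p : Pt) : ℝ :=
  ((c.1 * x1 p + d.1) ^ 2 + c.1 ^ 2 * y1 p ^ 2) *
    ((c.2 * x2 p + d.2) ^ 2 + c.2 ^ 2 * y2 p ^ 2)

/-- `S = {(c,d) ∈ R² : cR + dR = R}`. -/
def Spairs (k : ℕ) : Set (R k × R k) := {cd | Ideal.span {cd.1, cd.2} = ⊤}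

/-- `V_{c,d}^≥ = {Z ∈ H²×H² : ‖cZ+d‖ ≥ 1}`. -/
def Vge (k : ℕ) (cd : R k × R k) : Set Pt :=
  {p ∈ HH | 1 ≤ HNorm (cd.1 : ℝ × ℝ) (cd.2 : ℝ × ℝ) p}

/-- `V_{c,d}^≤ = {Z ∈ H²×H² : ‖cZ+d‖ ≤ 1}`. -/
def Vle (k : ℕ) (cd : R k × R k) : Set Pt :=
  {p ∈ HH | HNorm (cd.1 : ℝ × ℝ) (cd.2 : ℝ × ℝ) p ≤ 1}

/-- `V_{c,d} = {Z ∈ H²×H² : ‖cZ+d‖ = 1}`. -/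
def Veq (k : ℕ) (cd : R k × R k) : Set Pt :=
  {p ∈ HH | HNorm (cd.1 : ℝ × ℝ) (cd.2 : ℝ × ℝ) p = 1}

/-- `F₀ = {Z ∈ H²×H² : ‖cZ+d‖ ≥ 1 for all (c,d) ∈ S}`. -/
def F0 (k : ℕ) : Set Pt :=
  {p ∈ HH | ∀ cd ∈ Spairs k, 1 ≤ HNorm (cd.1 : ℝ × ℝ) (cd.2 : ℝ × ℝ) p}

/-- `F_∞ = {(s₁,s₂,r,h) : |s₁| ≤ 1/2, |s₂| ≤ 1/2, ε₀⁻² ≤ r ≤ ε₀²}`, where `ε` stands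
for the fundamental unit `ε₀`. -/
def FInf (k : ℕ) (ε : ℝ) : Set Pt :=
  {p ∈ HH | |s1 k p| ≤ 1 / 2 ∧ |s2 k p| ≤ 1 / 2 ∧ (ε ^ 2)⁻¹ ≤ rr p ∧ rr p ≤ ε ^ 2}

/-- `F = F_∞ ∩ F₀`. -/
def F (k : ℕ) (ε : ℝ) : Set Pt := FInf k ε ∩ F0 k

/-- `SL₂(R)`. -/
abbrev SL (k : ℕ) := Matrix.SpecialLinearGroup (Fin 2) (R k)

/-- Möbius action on the upper half-plane: image of `x + y i` under `(a b; c d)`. -/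
def moeb (a b c d x y : ℝ) : ℝ × ℝ :=
  (((a * x + b) * (c * x + d) + a * c * y ^ 2) / ((c * x + d) ^ 2 + c ^ 2 * y ^ 2),
    y / ((c * x + d) ^ 2 + c ^ 2 * y ^ 2))

/-- The action of `γ ∈ SL₂(R)` on `H²×H²`: `γ` acts on the first factor through the first
embedding and through the conjugate matrix `γ'` (second embedding) on the second factor.
This descends to the Hilbert modular group `PSL₂(R)`. -/
def act (k : ℕ) (g : SL k) (p : Pt) : Pt :=
  ((moeb (g.1 0 0 : ℝ × ℝ).1 (g.1 0 1 : ℝ × ℝ).1 (g.1 1 0 : ℝ × ℝ).1 (g.1 1 1 : ℝ × ℝ).1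
      (x1 p) (y1 p)).1,
   (moeb (g.1 0 0 : ℝ × ℝ).2 (g.1 0 1 : ℝ × ℝ).2 (g.1 1 0 : ℝ × ℝ).2 (g.1 1 1 : ℝ × ℝ).2
      (x2 p) (y2 p)).1,
   (moeb (g.1 0 0 : ℝ × ℝ).1 (g.1 0 1 : ℝ × ℝ).1 (g.1 1 0 : ℝ × ℝ).1 (g.1 1 1 : ℝ × ℝ).1
      (x1 p) (y1 p)).2,
   (moeb (g.1 0 0 : ℝ × ℝ).2 (g.1 0 1 : ℝ × ℝ).2 (g.1 1 0 : ℝ × ℝ).2 (g.1 1 1 : ℝ × ℝ).2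
      (x2 p) (y2 p)).2)

/-- The pair of real embeddings of a unit of `R`. -/
def unitVal (k : ℕ) (u : (R k)ˣ) : ℝ × ℝ := ((u : R k) : ℝ × ℝ)

/-- `e` is the fundamental unit of `R`: the smallest unit of `R` greater than `1`
(with respect to the first embedding). -/
def IsFundUnit (k : ℕ) (e : (R k)ˣ) : Prop :=
  1 < (unitVal k e).1 ∧
    ∀ v : (R k)ˣ, 1 < (unitVal k v).1 → (unitVal k e).1 ≤ (unitVal k v).1

/-- The real number `ε₀ > 1`, the fundamental unit under the first embedding. -/
def eps (k : ℕ) (e : (R k)ˣ) : ℝ := (unitVal k e).1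


/-- The norm `N(c) = c c'` of an element of `R` (as a real number). -/
def Nm (k : ℕ) (c : R k) : ℝ := ((c : ℝ × ℝ)).1 * ((c : ℝ × ℝ)).2

/-- A subset `C` of `H²×H²` is hyperbolically bounded if it is bounded in the
Euclidean metric and `y₁, y₂ > ε` on `C` for some `ε > 0`. -/
def HypBounded (C : Set Pt) : Prop :=
  C ⊆ HH ∧ Bornology.IsBounded C ∧ ∃ ε > (0 : ℝ), ∀ p ∈ C, ε < y1 p ∧ ε < y2 p

/-- `V_{C,μ} = {(c,d) ∈ R × R : ‖cZ+d‖ ≤ μ for some Z ∈ C}`. -/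
def VCmu (k : ℕ) (C : Set Pt) (μ : ℝ) : Set (R k × R k) :=
  {cd | ∃ p ∈ C, HNorm (cd.1 : ℝ × ℝ) (cd.2 : ℝ × ℝ) p ≤ μ}

/-- The conditions (8) of Theorem `FiniteSides` on a pair `(c,d) ∈ R²`. -/
def SCond (k : ℕ) (ε : ℝ) (cd : R k × R k) : Prop :=
  cd.1 ≠ 0 ∧ Ideal.span {cd.1, cd.2} = ⊤ ∧
    |Nm k cd.1| ≤ 2 * k / (k0 k) ^ 2 ∧
    |((cd.2 : ℝ × ℝ)).1 / ((cd.1 : ℝ × ℝ)).1| <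
      ε * Real.sqrt (2 * k / (Nm k cd.1 ^ 2 * (k0 k) ^ 2) - (k0 k) ^ 2 / (2 * k)) +
        (1 + omg k) / 2 ∧
    |((cd.2 : ℝ × ℝ)).2 / ((cd.1 : ℝ × ℝ)).2| <
      ε * Real.sqrt (2 * k / (Nm k cd.1 ^ 2 * (k0 k) ^ 2) - (k0 k) ^ 2 / (2 * k)) +
        (1 - omg' k) / 2

/-- `S₁` is a set of representatives, up to multiplication by units of `R`, of the pairs
`(c,d) ∈ R²` satisfying the conditions `SCond`. -/
def IsRepSet (k : ℕ) (ε : ℝ) (S1 : Set (R k × R k)) : Prop :=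
  (∀ cd ∈ S1, SCond k ε cd) ∧
    (∀ cd : R k × R k, SCond k ε cd →
      ∃ ab ∈ S1, ∃ u : (R k)ˣ, cd.1 = (u : R k) * ab.1 ∧ cd.2 = (u : R k) * ab.2) ∧
    (∀ ab ∈ S1, ∀ ab' ∈ S1,
      (∃ u : (R k)ˣ, ab'.1 = (u : R k) * ab.1 ∧ ab'.2 = (u : R k) * ab.2) → ab = ab')

/-- The family `𝒱_∞ = {V_i^± : i = 1,2,3}`. -/
def VfamInf (k : ℕ) (ε : ℝ) : Set (Set Pt) :=
  { {p ∈ HH | s1 k p = 1 / 2}, {p ∈ HH | s1 k p = -(1 / 2)},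
    {p ∈ HH | s2 k p = 1 / 2}, {p ∈ HH | s2 k p = -(1 / 2)},
    {p ∈ HH | rr p = ε ^ 2}, {p ∈ HH | rr p = (ε ^ 2)⁻¹} }

/-- The family `𝒱 = {V_{c,d} : (c,d) ∈ S, c ≠ 0}`. -/
def Vfam (k : ℕ) : Set (Set Pt) :=
  {V | ∃ cd ∈ Spairs k, cd.1 ≠ 0 ∧ V = Veq k cd}

/-- The family `𝓜 = {γ(M) : γ ∈ Γ, M ∈ 𝒱 ∪ 𝒱_∞}`. -/
def Mfam (k : ℕ) (ε : ℝ) : Set (Set Pt) :=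
  {M | ∃ g : SL k, ∃ V ∈ Vfam k ∪ VfamInf k ε, M = act k g '' V}

/-- `ω` as an element of `R`. -/
def omR (k : ℕ) : R k := ⟨(omg k, omg' k), Subring.subset_closure rfl⟩

/-- The side-pairing transformations: `γ ≠ 1` (in `PSL₂(R)`) such that `F ∩ γ⁻¹(F)` has
Hausdorff dimension `3`. -/
def SidePairings (k : ℕ) (ε : ℝ) : Set (SL k) :=
  {g | g ≠ 1 ∧ g.1 ≠ -1 ∧ dimH (F k ε ∩ act k g⁻¹ '' F k ε) = 3}

/-! On a compact subset of `H²×H²` the `x`-coordinates are bounded and the `y`-coordinates are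
bounded below by some `δ > 0`. Multiplying `(c,d)` by a power of `ε₀` leaves `V_{c,d}` unchanged,
since units have norm `±1`, and achieves `1 ≤ |c| ≤ ε₀`; then `|c'| ≥ 1/ε₀` because `|N(c)| ≥ 1`.
At a point of `V_{c,d}` the two factors of `‖cZ+d‖` are then at least `δ²` and `δ²/ε₀²`, and their
product is `1`, so both are bounded, which bounds `c, c', d, d'`. Bounded subsets of the lattice
`R` are finite, and `𝒱_∞` has six members. -/

lemma irrational_sqrt_of_squarefree {k : ℕ} (hk : Squarefree k) (hk1 : 1 < k) :
    Irrational √(k : ℝ) := by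
  rw [irrational_sqrt_natCast_iff]
  rintro ⟨m, rfl⟩
  obtain rfl : m = 1 := Nat.isUnit_iff.mp (hk m dvd_rfl)
  exact hk1.ne' rfl

section

variable {k : ℕ}

def omgTrace (k : ℕ) : ℤ := if k % 4 = 1 then 1 else 2

def omgNorm (k : ℕ) : ℤ := if k % 4 = 1 then (1 - k) / 4 else 1 - k

lemma omg_add_omg' (k : ℕ) : omg k + omg' k = omgTrace k := by
  unfold omgTrace omg omg' k0
  split <;> push_cast <;> ring

lemma omg_mul_omg' (k : ℕ) : omg k * omg' k = omgNorm k := by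
  have hs : √(k : ℝ) * √k = k := Real.mul_self_sqrt k.cast_nonneg
  unfold omgNorm omg omg' k0
  split
  · obtain ⟨m, hm⟩ : (4 : ℤ) ∣ k - 1 := by omega
    rw [show (1 - k : ℤ) / 4 = -m by omega]
    have hk : (k : ℝ) = 4 * m + 1 := by exact_mod_cast (by omega : (k : ℤ) = 4 * m + 1)
    push_cast
    linear_combination -hs / 4 - hk / 4
  · push_cast
    linear_combination -hs

lemma exists_int_of_mem_R {x : ℝ × ℝ} (hx : x ∈ R k) :
    ∃ a b : ℤ, x = (a + b * omg k, a + b * omg' k) := by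
  induction hx using Subring.closure_induction with
  | mem x hx => exact ⟨0, 1, by simp [Set.mem_singleton_iff.mp hx]⟩
  | zero => exact ⟨0, 0, by simp [Prod.ext_iff]⟩
  | one => exact ⟨1, 0, by simp [Prod.ext_iff]⟩
  | add x y _ _ ihx ihy =>
    obtain ⟨a, b, rfl⟩ := ihx
    obtain ⟨c, d, rfl⟩ := ihy
    refine ⟨a + c, b + d, ?_⟩
    simp only [Prod.mk_add_mk, Prod.ext_iff]
    push_cast
    constructor <;> ring
  | neg x _ ihx =>
    obtain ⟨a, b, rfl⟩ := ihx
    refine ⟨-a, -b, ?_⟩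
    simp only [Prod.neg_mk, Prod.ext_iff]
    push_cast
    constructor <;> ring
  | mul x y _ _ ihx ihy =>
    obtain ⟨a, b, rfl⟩ := ihx
    obtain ⟨c, d, rfl⟩ := ihy
    -- `ω² = tω - n` and `ω'² = tω' - n`, with `t, n` the trace and norm of `ω`
    refine ⟨a * c - b * d * omgNorm k, a * d + b * c + b * d * omgTrace k, ?_⟩
    have ht := omg_add_omg' k
    have hn := omg_mul_omg' k
    simp only [Prod.mk_mul_mk, Prod.ext_iff]
    push_cast
    constructor
    · linear_combination (b * d : ℝ) * omg k * ht - (b * d : ℝ) * hn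
    · linear_combination (b * d : ℝ) * omg' k * ht - (b * d : ℝ) * hn

lemma Nm_mul (a b : R k) : Nm k (a * b) = Nm k a * Nm k b := by
  simp only [Nm, Subring.coe_mul, Prod.fst_mul, Prod.snd_mul]
  ring

lemma exists_Nm_eq_intCast (c : R k) : ∃ N : ℤ, Nm k c = N := by
  obtain ⟨a, b, hab⟩ := exists_int_of_mem_R c.2
  refine ⟨a * a + a * b * omgTrace k + b * b * omgNorm k, ?_⟩
  rw [Nm, hab]
  push_cast
  linear_combination (a * b : ℝ) * omg_add_omg' k + (b * b : ℝ) * omg_mul_omg' k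

lemma abs_Nm_units (u : (R k)ˣ) : |Nm k u| = 1 := by
  obtain ⟨N, hN⟩ := exists_Nm_eq_intCast (u : R k)
  obtain ⟨N', hN'⟩ := exists_Nm_eq_intCast ((u⁻¹ : (R k)ˣ) : R k)
  have h : Nm k u * Nm k ↑u⁻¹ = 1 := by
    rw [← Nm_mul, Units.mul_inv]
    simp [Nm]
  rw [hN, hN'] at h
  rcases Int.eq_one_or_neg_one_of_mul_eq_one (by exact_mod_cast h : N * N' = 1) with h1 | h1 <;>
    simp [hN, h1]

lemma _root_.Irrational.intCast_add_mul_eq_zero_iff {s : ℝ} (hs : Irrational s) {a b : ℤ} :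
    (a : ℝ) + b * s = 0 ↔ a = 0 ∧ b = 0 := by
  refine ⟨fun h ↦ ?_, fun ⟨ha, hb⟩ ↦ by simp [ha, hb]⟩
  obtain rfl : b = 0 := by
    by_contra hb
    exact ((hs.intCast_mul hb).intCast_add a).ne_zero h
  exact ⟨by simpa using h, rfl⟩

lemma k0_eq_natCast (k : ℕ) : ∃ m : ℕ, m ≠ 0 ∧ k0 k = m := by
  unfold k0
  split
  exacts [⟨2, two_ne_zero, by norm_num⟩, ⟨1, one_ne_zero, by norm_num⟩]

lemma irrational_omg (hk : Irrational √(k : ℝ)) : Irrational (omg k) := by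
  obtain ⟨m, hm, hk0⟩ := k0_eq_natCast k
  rw [omg, hk0, add_comm]
  exact_mod_cast (hk.add_natCast 1).div_natCast hm

lemma irrational_omg' (hk : Irrational √(k : ℝ)) : Irrational (omg' k) := by
  obtain ⟨m, hm, hk0⟩ := k0_eq_natCast k
  rw [omg', hk0]
  exact_mod_cast (hk.natCast_sub 1).div_natCast hm

lemma one_le_abs_Nm (hk : Irrational √(k : ℝ)) {c : R k} (hc : c ≠ 0) : 1 ≤ |Nm k c| := by
  obtain ⟨a, b, hab⟩ := exists_int_of_mem_R c.2
  have hab0 : ¬(a = 0 ∧ b = 0) := by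
    rintro ⟨rfl, rfl⟩
    exact hc (Subtype.ext (hab.trans (by simp)))
  obtain ⟨N, hN⟩ := exists_Nm_eq_intCast c
  have hN0 : N ≠ 0 := by
    rintro rfl
    rw [Nm, hab, Int.cast_zero, mul_eq_zero,
      (irrational_omg hk).intCast_add_mul_eq_zero_iff,
      (irrational_omg' hk).intCast_add_mul_eq_zero_iff, or_self] at hN
    exact hab0 hN
  rw [hN, ← Int.cast_abs]
  exact_mod_cast Int.one_le_abs hN0

lemma finite_setOf_norm_le (hk : Irrational √(k : ℝ)) (L : ℝ) :
    {x : R k | ‖(x : ℝ × ℝ)‖ ≤ L}.Finite := by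
  obtain ⟨m, hm, hk0⟩ := k0_eq_natCast k
  set δ := omg k - omg' k
  have hδ : δ ≠ 0 := by
    rw [show δ = 2 * √k / k0 k by simp only [δ, omg, omg']; ring, hk0]
    exact div_ne_zero (mul_ne_zero two_ne_zero hk.ne_zero) (Nat.cast_ne_zero.mpr hm)
  set B := 2 * L / |δ|
  set A := L + B * |omg k|
  have hIcc {n : ℤ} {T : ℝ} (h : |(n : ℝ)| ≤ T) : n ∈ Set.Icc (-⌈T⌉) ⌈T⌉ :=
    abs_le.mp (by exact_mod_cast h.trans (Int.le_ceil _))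
  let f : ℤ × ℤ → ℝ × ℝ := fun q ↦ (q.1 + q.2 * omg k, q.1 + q.2 * omg' k)
  refine ((((Set.finite_Icc (-⌈A⌉) ⌈A⌉).prod (Set.finite_Icc (-⌈B⌉) ⌈B⌉)).image f).preimage
    Subtype.val_injective.injOn).subset fun x hx ↦ ?_
  obtain ⟨hx1, hx2⟩ := norm_prod_le_iff.mp hx
  rw [Real.norm_eq_abs] at hx1 hx2
  obtain ⟨a, b, hab⟩ := exists_int_of_mem_R x.2
  have hb : |(b : ℝ)| ≤ B := by
    rw [le_div_iff₀ (abs_pos.mpr hδ), ← abs_mul]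
    calc |(b : ℝ) * δ| = |(x : ℝ × ℝ).1 - (x : ℝ × ℝ).2| := by
          rw [hab]; congr 1; dsimp only; ring
      _ ≤ |(x : ℝ × ℝ).1| + |(x : ℝ × ℝ).2| := abs_sub _ _
      _ ≤ 2 * L := by linarith
  have ha : |(a : ℝ)| ≤ A :=
    calc |(a : ℝ)| = |(x : ℝ × ℝ).1 - b * omg k| := by rw [hab]; congr 1; dsimp only; ring
      _ ≤ |(x : ℝ × ℝ).1| + |(b : ℝ)| * |omg k| := (abs_sub _ _).trans_eq (by rw [abs_mul])
      _ ≤ A := add_le_add hx1 (mul_le_mul_of_nonneg_right hb (abs_nonneg _))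
  exact ⟨(a, b), ⟨hIcc ha, hIcc hb⟩, hab.symm⟩

lemma HNorm_mul_mul (a c d : ℝ × ℝ) (p : Pt) :
    HNorm (a * c) (a * d) p = (a.1 * a.2) ^ 2 * HNorm c d p := by
  simp only [HNorm, Prod.fst_mul, Prod.snd_mul]
  ring

lemma Veq_units_mul (u : (R k)ˣ) (c d : R k) : Veq k (u * c, u * d) = Veq k (c, d) := by
  have hu : (((u : R k) : ℝ × ℝ).1 * ((u : R k) : ℝ × ℝ).2) ^ 2 = 1 := by
    have h := abs_Nm_units u
    unfold Nm at h
    rw [← sq_abs, h, one_pow]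
  ext p
  simp only [Veq, Subring.coe_mul, HNorm_mul_mul, hu, one_mul]

lemma exists_units_one_le_abs_fst_mul_le {e : (R k)ˣ} (he : 1 < eps k e) {c : R k}
    (hc : (c : ℝ × ℝ).1 ≠ 0) :
    ∃ u : (R k)ˣ, 1 ≤ |((u * c : R k) : ℝ × ℝ).1| ∧ |((u * c : R k) : ℝ × ℝ).1| ≤ eps k e := by
  obtain ⟨n, hn, hn1⟩ := exists_mem_Ico_zpow (abs_pos.mpr hc) he
  have hEn : 0 < eps k e ^ n := zpow_pos (one_pos.trans he) n
  let φ : (R k)ˣ →* ℝˣ := Units.map ((RingHom.fst ℝ ℝ).comp (R k).subtype).toMonoidHom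
  have hu : (((e ^ (-n) : (R k)ˣ) : R k) : ℝ × ℝ).1 = (eps k e ^ n)⁻¹ := by
    rw [← zpow_neg]
    exact (congrArg Units.val (map_zpow φ e (-n))).trans (Units.val_zpow_eq_zpow_val _ _)
  refine ⟨e ^ (-n), ?_, ?_⟩ <;>
    rw [Subring.coe_mul, Prod.fst_mul, hu, abs_mul, abs_inv, abs_of_pos hEn]
  · exact (le_inv_mul_iff₀ hEn).mpr (by simpa using hn)
  · rw [inv_mul_le_iff₀ hEn, ← zpow_add_one₀ (one_pos.trans he).ne']
    exact hn1.le

lemma abs_le_of_sq_add_sq_le {c d x y M δ B : ℝ} (hδ : 0 < δ) (hB : 0 ≤ B) (hx : |x| ≤ M)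
    (hy : δ ≤ y) (h : (c * x + d) ^ 2 + c ^ 2 * y ^ 2 ≤ B ^ 2) :
    |c| ≤ B / δ ∧ |d| ≤ B + B / δ * M := by
  have hcy : |c * y| ≤ B :=
    abs_le_of_sq_le_sq (by linarith [sq_nonneg (c * x + d), mul_pow c y 2]) hB
  have hcxd : |c * x + d| ≤ B := abs_le_of_sq_le_sq (by linarith [sq_nonneg (c * y)]) hB
  have hc : |c| ≤ B / δ := by
    rw [le_div_iff₀ hδ]
    calc |c| * δ ≤ |c| * y := mul_le_mul_of_nonneg_left hy (abs_nonneg c)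
      _ = |c * y| := by rw [abs_mul, abs_of_pos (hδ.trans_le hy)]
      _ ≤ B := hcy
  refine ⟨hc, ?_⟩
  calc |d| = |(c * x + d) - c * x| := by ring_nf
    _ ≤ |c * x + d| + |c| * |x| := (abs_sub _ _).trans_eq (by rw [abs_mul])
    _ ≤ B + B / δ * M := add_le_add hcxd (mul_le_mul hc hx (abs_nonneg _) (by positivity))

lemma norm_le_of_HNorm_le_one {c d : ℝ × ℝ} {p : Pt} {M δ E : ℝ} (hδ : 0 < δ)
    (hx1 : |x1 p| ≤ M) (hx2 : |x2 p| ≤ M) (hy1 : δ ≤ y1 p) (hy2 : δ ≤ y2 p)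
    (hc1 : 1 ≤ |c.1|) (hc1E : |c.1| ≤ E) (hN : 1 ≤ |c.1 * c.2|) (h : HNorm c d p ≤ 1) :
    ‖c‖ ≤ E / δ / δ ∧ ‖d‖ ≤ E / δ + E / δ / δ * M := by
  set A := (c.1 * x1 p + d.1) ^ 2 + c.1 ^ 2 * y1 p ^ 2
  set B := (c.2 * x2 p + d.2) ^ 2 + c.2 ^ 2 * y2 p ^ 2
  have hE : 0 < E := one_pos.trans_le (hc1.trans hc1E)
  have hA : δ ^ 2 ≤ A := by
    have h1 := (one_le_sq_iff_one_le_abs _).mpr hc1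
    have h2 := pow_le_pow_left₀ hδ.le hy1 2
    nlinarith [sq_nonneg (c.1 * x1 p + d.1)]
  -- `|c.2| ≥ 1/E` because `|c.1 * c.2| ≥ 1` and `|c.1| ≤ E`
  have hB : (δ / E) ^ 2 ≤ B := by
    have h1 : 1 ≤ (E * c.2) ^ 2 := (one_le_sq_iff_one_le_abs _).mpr <| by
      rw [abs_mul, abs_of_pos hE]
      exact hN.trans (by rw [abs_mul]; exact mul_le_mul_of_nonneg_right hc1E (abs_nonneg _))
    have h2 := pow_le_pow_left₀ hδ.le hy2 2
    rw [div_pow, div_le_iff₀ (by positivity)]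
    nlinarith [sq_nonneg (c.2 * x2 p + d.2)]
  have hA' : A ≤ (E / δ) ^ 2 := by
    have h1 : A * (δ / E) ^ 2 ≤ 1 := (mul_le_mul_of_nonneg_left hB (by positivity)).trans h
    rwa [← le_div_iff₀ (by positivity), one_div, ← inv_pow, inv_div] at h1
  have hB' : B ≤ (E / δ) ^ 2 := by
    have h1 : B * δ ^ 2 ≤ 1 :=
      (mul_le_mul_of_nonneg_left hA (by positivity)).trans (by rw [mul_comm]; exact h)
    rw [div_pow, le_div_iff₀ (by positivity)]
    linarith [one_le_pow₀ (n := 2) (hc1.trans hc1E)]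
  obtain ⟨hc1', hd1⟩ := abs_le_of_sq_add_sq_le hδ (by positivity) hx1 hy1 hA'
  obtain ⟨hc2', hd2⟩ := abs_le_of_sq_add_sq_le hδ (by positivity) hx2 hy2 hB'
  exact ⟨norm_prod_le_iff.mpr ⟨hc1', hc2'⟩, norm_prod_le_iff.mpr ⟨hd1, hd2⟩⟩

lemma _root_.IsCompact.hypBounded {C : Set Pt} (hC : C ⊆ HH) (hCc : IsCompact C) :
    HypBounded C := by
  have hy : Continuous fun p : Pt ↦ min (y1 p) (y2 p) := by unfold y1 y2; fun_prop
  obtain ⟨δ, hδ, hδC⟩ := hCc.exists_forall_le' hy.continuousOn (a := 0)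
    fun p hp ↦ lt_min (hC hp).1 (hC hp).2
  refine ⟨hC, hCc.isBounded, δ / 2, half_pos hδ, fun p hp ↦ ?_⟩
  have := le_min_iff.mp (hδC p hp)
  constructor <;> linarith

lemma HypBounded.finite_Vfam_inter_nonempty (hk : Irrational √(k : ℝ)) {e : (R k)ˣ}
    (he : 1 < eps k e) {C : Set Pt} (hC : HypBounded C) :
    {V ∈ Vfam k | (V ∩ C).Nonempty}.Finite := by
  obtain ⟨-, hCb, δ, hδ, hCy⟩ := hC
  obtain ⟨M, hM⟩ := hCb.exists_norm_le
  set E := eps k e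
  refine (((finite_setOf_norm_le hk (E / δ / δ)).prod
    (finite_setOf_norm_le hk (E / δ + E / δ / δ * M))).image (Veq k)).subset ?_
  rintro _ ⟨⟨⟨c, d⟩, -, hc, rfl⟩, p, hpV, hpC⟩
  have hN : 1 ≤ |Nm k c| := one_le_abs_Nm hk hc
  obtain ⟨u, hu1, huE⟩ :=
    exists_units_one_le_abs_fst_mul_le he (left_ne_zero_of_mul (abs_pos.mp (one_pos.trans_le hN)))
  have hNu : 1 ≤ |Nm k (u * c)| := by rwa [Nm_mul, abs_mul, abs_Nm_units, one_mul]
  rw [← Veq_units_mul u] at hpV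
  have hx1 : |x1 p| ≤ M := (norm_fst_le p).trans (hM p hpC)
  have hx2 : |x2 p| ≤ M := ((norm_fst_le p.2).trans (norm_snd_le p)).trans (hM p hpC)
  exact ⟨(u * c, u * d), norm_le_of_HNorm_le_one hδ hx1 hx2 (hCy p hpC).1.le (hCy p hpC).2.le
    hu1 huE hNu hpV.2.le, Veq_units_mul u c d⟩

end

/-- The collection `𝒱 ∪ 𝒱_∞` is locally finite: every compact subset of
`H²×H²` meets only finitely many distinct sets belonging to `𝒱 ∪ 𝒱_∞`. -/
theorem Vfam_locallyFinite (k : ℕ) (hk : Squarefree k) (hk1 : 1 < k)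
    (e : (R k)ˣ) (he : IsFundUnit k e)
    (C : Set Pt) (hC : C ⊆ HH) (hCc : IsCompact C) :
    {V ∈ Vfam k ∪ VfamInf k (eps k e) | (V ∩ C).Nonempty}.Finite := by
  have hVfam := (hCc.hypBounded hC).finite_Vfam_inter_nonempty
    (irrational_sqrt_of_squarefree hk hk1) he.1
  have hVfamInf : (VfamInf k (eps k e)).Finite := by
    unfold VfamInf
    exact Set.toFinite _
  refine (hVfam.union hVfamInf).subset ?_
  rintro V ⟨hV | hV, hne⟩
  exacts [Or.inl ⟨hV, hne⟩, Or.inr hV]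

end Hilbert
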